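/- For any DL-Lite_core^bag ontology K and any bag model I of K, there exists an e-homomorphism from the enumerated canonical bag model C(K)^e to the enumerated interpretation I^e that is predicate-injective on individuals. -/

import Mathlib

/-!
Common formalization of the bag semantics of DL-Lite ontologies
(Nikolaou et al., "The Bag Semantics of Ontology-Based Data Access").
-/

open scoped Classical

noncomputable section

/-- Individuals (constants). -/
abbrev Ind : Type := ℕ
/-- Variables. -/
abbrev Var : Type := ℕ
/-- Atomic concepts (unary predicates). -/
abbrev AtomicConcept : Type := ℕ
/-- Atomic roles (binary predicates). -/
abbrev AtomicRole : Type := ℕ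

/-- A role is an atomic role or its inverse. -/
inductive Role where
  | atomic : AtomicRole → Role
  | inv : AtomicRole → Role
  deriving DecidableEq

/-- A concept is an atomic concept or `∃R` for a role `R`. -/
inductive DLConcept where
  | atomic : AtomicConcept → DLConcept
  | ex : Role → DLConcept
  deriving DecidableEq

/-- TBox axioms: inclusions and disjointness axioms between concepts or roles. -/
inductive TBoxAxiom where
  | cIncl : DLConcept → DLConcept → TBoxAxiom
  | rIncl : Role → Role → TBoxAxiom
  | cDisj : DLConcept → DLConcept → TBoxAxiom
  | rDisj : Role → Role → TBoxAxiom
  deriving DecidableEq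

/-- A DL-Lite_R TBox: a finite set of TBox axioms. -/
abbrev TBox : Type := Finset TBoxAxiom

/-- A DL-Lite_core TBox: only concept inclusions and concept disjointness axioms. -/
def TBox.IsCore (T : TBox) : Prop :=
  ∀ ax ∈ T, (∃ C D, ax = TBoxAxiom.cIncl C D) ∨ (∃ C D, ax = TBoxAxiom.cDisj C D)

/-- ABox assertions. -/
inductive Assertion where
  | conceptA : AtomicConcept → Ind → Assertion
  | roleA : AtomicRole → Ind → Ind → Assertion
  deriving DecidableEq

/-- A bag ABox: a finite bag of assertions (represented as a multiset). -/
abbrev BagABox : Type := Multiset Assertion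

/-- Multiplicity of an assertion in a bag ABox, as an extended natural. -/
def BagABox.mult (A : BagABox) (s : Assertion) : ℕ∞ := (A.count s : ℕ∞)

/-- Sum of an arbitrary family of extended naturals. -/
def bagSum {α : Type*} (f : α → ℕ∞) : ℕ∞ := ⨆ s : Finset α, ∑ x ∈ s, f x

/-- A bag interpretation. -/
structure BagInterp : Type 1 where
  Δ : Type
  dne : Nonempty Δ
  indMap : Ind → Δ
  indInj : Function.Injective indMap
  cI : AtomicConcept → Δ → ℕ∞
  rI : AtomicRole → Δ → Δ → ℕ∞

/-- Extension of the interpretation function to roles. -/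
def BagInterp.roleMult (I : BagInterp) : Role → I.Δ → I.Δ → ℕ∞
  | Role.atomic P => fun u v => I.rI P u v
  | Role.inv P => fun u v => I.rI P v u

/-- Extension of the interpretation function to concepts. -/
def BagInterp.conceptMult (I : BagInterp) : DLConcept → I.Δ → ℕ∞
  | DLConcept.atomic A => fun u => I.cI A u
  | DLConcept.ex R => fun u => bagSum (fun v => I.roleMult R u v)

/-- Multiplicity of an assertion in a bag interpretation. -/
def BagInterp.assertMult (I : BagInterp) : Assertion → ℕ∞
  | Assertion.conceptA A a => I.cI A (I.indMap a)
  | Assertion.roleA P a b => I.rI P (I.indMap a) (I.indMap b)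

/-- Satisfaction of a TBox axiom by a bag interpretation. -/
def BagInterp.SatisfiesAx (I : BagInterp) : TBoxAxiom → Prop
  | TBoxAxiom.cIncl C D => ∀ u, I.conceptMult C u ≤ I.conceptMult D u
  | TBoxAxiom.rIncl R S => ∀ u v, I.roleMult R u v ≤ I.roleMult S u v
  | TBoxAxiom.cDisj C D => ∀ u, min (I.conceptMult C u) (I.conceptMult D u) = 0
  | TBoxAxiom.rDisj R S => ∀ u v, min (I.roleMult R u v) (I.roleMult S u v) = 0

/-- A DL-Lite^bag ontology. -/
structure Ontology : Type where
  tbox : TBox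
  abox : BagABox

/-- `I` is a bag model of the ontology `K`. -/
def BagInterp.IsModel (I : BagInterp) (K : Ontology) : Prop :=
  (∀ ax ∈ K.tbox, I.SatisfiesAx ax) ∧
  ∀ s : Assertion, BagABox.mult K.abox s ≤ I.assertMult s

/-- Satisfiability of an ontology under bag semantics. -/
def Ontology.Satisfiable (K : Ontology) : Prop := ∃ I : BagInterp, I.IsModel K

/- ## Conjunctive queries -/

/-- Terms: variables or individuals. -/
inductive Term where
  | var : Var → Term
  | ind : Ind → Term
  deriving DecidableEq

def Term.varsOf : Term → List Var
  | Term.var v => [v]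
  | Term.ind _ => []

def Term.indsOf : Term → List Ind
  | Term.var _ => []
  | Term.ind a => [a]

/-- Query atoms: concept atoms, role atoms, and equalities. -/
inductive QAtom where
  | conceptAt : AtomicConcept → Term → QAtom
  | roleAt : AtomicRole → Term → Term → QAtom
  | eqAt : Var → Term → QAtom
  deriving DecidableEq

def QAtom.terms : QAtom → List Term
  | QAtom.conceptAt _ t => [t]
  | QAtom.roleAt _ t₁ t₂ => [t₁, t₂]
  | QAtom.eqAt z t => [Term.var z, t]

def QAtom.vars : QAtom → List Var
  | QAtom.conceptAt _ t => t.varsOf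
  | QAtom.roleAt _ t₁ t₂ => t₁.varsOf ++ t₂.varsOf
  | QAtom.eqAt z t => z :: t.varsOf

/-- A conjunctive query `q(x) = ∃y. φ(x,y)`: a tuple of answer variables,
a tuple of existential variables, and a conjunction (list, i.e. allowing
repetitions) of atoms. -/
structure CQ : Type where
  answerVars : List Var
  existVars : List Var
  atoms : List QAtom

def CQ.vars (q : CQ) : List Var := q.answerVars ++ q.existVars

/-- Value of a term under a valuation of the variables. -/
def termVal (I : BagInterp) (f : Var → I.Δ) : Term → I.Δ
  | Term.var v => f v
  | Term.ind a => I.indMap a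

/-- Multiplicity contributed by an atom under a valuation: for predicate atoms the
multiplicity of the image tuple, for equalities the indicator of satisfaction. -/
def QAtom.mult (I : BagInterp) (f : Var → I.Δ) : QAtom → ℕ∞
  | QAtom.conceptAt A t => I.cI A (termVal I f t)
  | QAtom.roleAt P t₁ t₂ => I.rI P (termVal I f t₁) (termVal I f t₂)
  | QAtom.eqAt z t => if f z = termVal I f t then 1 else 0

/-- The bag answers `q^I(ā)`: the sum, over all valuations of the variables of `q`
mapping the answer variables to `ā` (valuations are normalized to a fixed junk
value outside the variables of `q`), of the product of the multiplicities of the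
atom occurrences of `q`. -/
def CQ.bagAnswer (q : CQ) (I : BagInterp) (a : List Ind) : ℕ∞ :=
  bagSum (fun f : {f : Var → I.Δ //
      (∀ v, v ∉ q.vars → f v = I.indMap 0) ∧
      q.answerVars.map f = a.map I.indMap} =>
    (q.atoms.map (QAtom.mult I f.1)).prod)

/-- Bag certain answers: pointwise minimum over all bag models. -/
def bagCertain (K : Ontology) (q : CQ) (a : List Ind) : ℕ∞ :=
  ⨅ (I : BagInterp) (_ : I.IsModel K), q.bagAnswer I a

/-- Base relation of the equivalence relation generated by the equality atoms. -/
def CQ.eqBase (q : CQ) : Term → Term → Prop := fun t₁ t₂ =>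
  ∃ z t, QAtom.eqAt z t ∈ q.atoms ∧ t₁ = Term.var z ∧ t₂ = t

/-- Equivalence of terms generated by the equality atoms of `q`. -/
def CQ.eqRel (q : CQ) : Term → Term → Prop := Relation.EqvGen q.eqBase

/-- Safety: the class of every variable contains a term occurring in a
non-equality atom. -/
def CQ.Safe (q : CQ) : Prop :=
  ∀ v ∈ q.vars, ∃ t : Term, ∃ atm ∈ q.atoms,
    (∀ z s, atm ≠ QAtom.eqAt z s) ∧ t ∈ QAtom.terms atm ∧ q.eqRel (Term.var v) t

/-- Well-formedness of CQs: repetition-free disjoint tuples of variables, all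
variables of the atoms among the declared variables, and safety. -/
def CQ.WellFormed (q : CQ) : Prop :=
  q.answerVars.Nodup ∧ q.existVars.Nodup ∧
  (∀ v ∈ q.answerVars, v ∉ q.existVars) ∧
  (∀ atm ∈ q.atoms, ∀ v ∈ QAtom.vars atm, v ∈ q.vars) ∧
  q.Safe

def CQ.mentionsTerm (q : CQ) (t : Term) : Prop := ∃ atm ∈ q.atoms, t ∈ QAtom.terms atm

/-- Adjacency in the Gaifman graph of `q` (on terms; equality atoms merge the
classes of their two terms, which for connectivity purposes is the same as
making them adjacent). -/
def CQ.gaifmanAdj (q : CQ) : Term → Term → Prop := fun t₁ t₂ =>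
  ∃ atm ∈ q.atoms, t₁ ∈ QAtom.terms atm ∧ t₂ ∈ QAtom.terms atm

/-- A CQ is rooted if every connected component of its Gaifman graph contains
an answer variable or an individual. -/
def CQ.Rooted (q : CQ) : Prop :=
  ∀ t : Term, q.mentionsTerm t →
    ∃ t' : Term, Relation.ReflTransGen q.gaifmanAdj t t' ∧
      ((∃ v ∈ q.answerVars, t' = Term.var v) ∨ ∃ a : Ind, t' = Term.ind a)

/- ## Set semantics -/

/-- A classical (set) interpretation. -/
structure SetInterp : Type 1 where
  Δ : Type
  dne : Nonempty Δ
  indMap : Ind → Δ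
  indInj : Function.Injective indMap
  cI : AtomicConcept → Set Δ
  rI : AtomicRole → Set (Δ × Δ)

def SetInterp.roleSet (I : SetInterp) : Role → Set (I.Δ × I.Δ)
  | Role.atomic P => I.rI P
  | Role.inv P => {p | (p.2, p.1) ∈ I.rI P}

def SetInterp.conceptSet (I : SetInterp) : DLConcept → Set I.Δ
  | DLConcept.atomic A => I.cI A
  | DLConcept.ex R => {u | ∃ v, (u, v) ∈ I.roleSet R}

def SetInterp.SatisfiesAx (I : SetInterp) : TBoxAxiom → Prop
  | TBoxAxiom.cIncl C D => I.conceptSet C ⊆ I.conceptSet D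
  | TBoxAxiom.rIncl R S => I.roleSet R ⊆ I.roleSet S
  | TBoxAxiom.cDisj C D => I.conceptSet C ∩ I.conceptSet D = ∅
  | TBoxAxiom.rDisj R S => I.roleSet R ∩ I.roleSet S = ∅

def SetInterp.SatisfiesAssertion (I : SetInterp) : Assertion → Prop
  | Assertion.conceptA A a => I.indMap a ∈ I.cI A
  | Assertion.roleA P a b => (I.indMap a, I.indMap b) ∈ I.rI P

/-- `I` is a (set) model of the TBox `T` and the set ABox `A`. -/
def SetInterp.IsModelOf (I : SetInterp) (T : TBox) (A : Finset Assertion) : Prop :=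
  (∀ ax ∈ T, I.SatisfiesAx ax) ∧ ∀ s ∈ A, I.SatisfiesAssertion s

def setTermVal (I : SetInterp) (f : Var → I.Δ) : Term → I.Δ
  | Term.var v => f v
  | Term.ind a => I.indMap a

def SetInterp.SatAtom (I : SetInterp) (f : Var → I.Δ) : QAtom → Prop
  | QAtom.conceptAt A t => setTermVal I f t ∈ I.cI A
  | QAtom.roleAt P t₁ t₂ => (setTermVal I f t₁, setTermVal I f t₂) ∈ I.rI P
  | QAtom.eqAt z t => f z = setTermVal I f t

/-- `q(ā)` holds in the set interpretation `I`. -/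
def SetInterp.SatCQ (I : SetInterp) (q : CQ) (a : List Ind) : Prop :=
  ∃ f : Var → I.Δ, q.answerVars.map f = a.map I.indMap ∧ ∀ atm ∈ q.atoms, I.SatAtom f atm

/-- Entailment of a concept inclusion from a TBox (standard set semantics). -/
def TBox.EntailsCI (T : TBox) (C D : DLConcept) : Prop :=
  ∀ I : SetInterp, (∀ ax ∈ T, I.SatisfiesAx ax) → I.conceptSet C ⊆ I.conceptSet D

/- ## The canonical bag model -/

/-- Domain elements of the canonical model: individuals and anonymous elements
`w^j_{u,R}`. -/
inductive CanElem where
  | ind : Ind → CanElem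
  | anon : CanElem → Role → ℕ → CanElem
  deriving DecidableEq

def CanElem.isAnon : CanElem → Prop
  | CanElem.ind _ => False
  | CanElem.anon _ _ _ => True

/-- A stage of the canonical-model construction: a set of active elements and
bag interpretations of the predicates. -/
structure PreInterp : Type where
  active : Set CanElem
  c : AtomicConcept → CanElem → ℕ∞
  r : AtomicRole → CanElem → CanElem → ℕ∞

def PreInterp.toInterp (P : PreInterp) : BagInterp where
  Δ := CanElem
  dne := ⟨CanElem.ind 0⟩
  indMap := CanElem.ind
  indInj := fun a b h => by cases h; rfl
  cI := P.c
  rI := P.r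

/-- Concept closure: `ccl(u,I,T)(C)` is the supremum of `C₀^I(u)` over all
concepts `C₀` with `T ⊨ C₀ ⊑ C`. -/
def cclI (T : TBox) (I : BagInterp) (C : DLConcept) (u : I.Δ) : ℕ∞ :=
  ⨆ C₀ : {C₀ : DLConcept // TBox.EntailsCI T C₀ C}, I.conceptMult C₀.1 u

def PreInterp.ccl (P : PreInterp) (T : TBox) (u : CanElem) (C : DLConcept) : ℕ∞ :=
  cclI T P.toInterp C u

/-- `δ = ccl(u,C_{i-1},T)(∃R) − (∃R)^{C_{i-1}}(u)` (truncated subtraction). -/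
def PreInterp.delta (P : PreInterp) (T : TBox) (u : CanElem) (R : Role) : ℕ∞ :=
  P.ccl T u (DLConcept.ex R) - P.toInterp.conceptMult (DLConcept.ex R) u

/-- The anonymous elements freshly added when stepping from `P`. -/
def PreInterp.NewAnon (P : PreInterp) (T : TBox) (w : CanElem) : Prop :=
  ∃ u R j, w = CanElem.anon u R j ∧ u ∈ P.active ∧ (j : ℕ∞) < P.delta T u R

/-- One step of the canonical-model construction. -/
def PreInterp.step (P : PreInterp) (T : TBox) : PreInterp where
  active := P.active ∪ {w | P.NewAnon T w}
  c := fun A u => if u ∈ P.active then P.ccl T u (DLConcept.atomic A) else 0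
  r := fun P₀ u v =>
    if u ∈ P.active ∧ v ∈ P.active then P.r P₀ u v
    else if ∃ j, v = CanElem.anon u (Role.atomic P₀) j ∧ P.NewAnon T v then 1
    else if ∃ j, u = CanElem.anon v (Role.inv P₀) j ∧ P.NewAnon T u then 1
    else 0

/-- The stages `C_i(K)` of the canonical bag model. -/
def canStage (K : Ontology) : ℕ → PreInterp
  | 0 =>
    { active := Set.range CanElem.ind
      c := fun A u =>
        match u with
        | CanElem.ind a => BagABox.mult K.abox (Assertion.conceptA A a)
        | _ => 0
      r := fun P u v =>
        match u, v with
        | CanElem.ind a, CanElem.ind b => BagABox.mult K.abox (Assertion.roleA P a b)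
        | _, _ => 0 }
  | (i + 1) => (canStage K i).step K.tbox

/-- The canonical bag model `C(K) = ⋃_{i ≥ 0} C_i(K)` (pointwise maximum). -/
def canInterp (K : Ontology) : BagInterp where
  Δ := CanElem
  dne := ⟨CanElem.ind 0⟩
  indMap := CanElem.ind
  indInj := fun a b h => by cases h; rfl
  cI := fun A u => ⨆ i, (canStage K i).c A u
  rI := fun P u v => ⨆ i, (canStage K i).r P u v

/-- The canonical bag model `C(⟨∅,A⟩)` of the ontology with empty TBox:
individuals as domain, every predicate interpreted by its ABox bag. -/
def emptyCanInterp (A : BagABox) : BagInterp where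
  Δ := Ind
  dne := ⟨0⟩
  indMap := id
  indInj := fun _ _ h => h
  cI := fun C a => BagABox.mult A (Assertion.conceptA C a)
  rI := fun P a b => BagABox.mult A (Assertion.roleA P a b)

/-- `[q,z]^{C(K)}`: bag answers over the canonical model computed only over
valuations sending the variables of `z` to anonymous elements and the remaining
existential variables to individuals. -/
def CQ.restrictedAnswer (q : CQ) (K : Ontology) (z : Finset Var) (a : List Ind) : ℕ∞ :=
  bagSum (fun f : {f : Var → CanElem //
      (∀ v, v ∉ q.vars → f v = CanElem.ind 0) ∧
      q.answerVars.map f = a.map CanElem.ind ∧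
      ∀ v ∈ q.existVars, (v ∈ z → CanElem.isAnon (f v)) ∧ (v ∉ z → ∃ b : Ind, f v = CanElem.ind b)} =>
    (q.atoms.map (QAtom.mult (canInterp K) f.1)).prod)

/- ## Ma-connected subsets, realisability, and the per-`z` rewritten query -/

/-- `t` is a variable belonging to `z`. -/
def Term.IsZVar (t : Term) (z : Finset Var) : Prop := ∃ v ∈ z, t = Term.var v

/-- Adjacency in the Gaifman graph restricted to nodes that are variables of `z`. -/
def CQ.zAdj (q : CQ) (z : Finset Var) : Term → Term → Prop := fun t₁ t₂ =>
  q.gaifmanAdj t₁ t₂ ∧ t₁.IsZVar z ∧ t₂.IsZVar z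

/-- `z'` is maximally connected in the anonymous part (ma-connected) within `z`. -/
def CQ.MAConnected (q : CQ) (z z' : Finset Var) : Prop :=
  z' ⊆ z ∧
  (∀ v ∈ z', ∀ w ∈ z, Relation.ReflTransGen (q.zAdj z) (Term.var v) (Term.var w) → w ∈ z') ∧
  (∀ v ∈ z', ∀ w ∈ z', Relation.ReflTransGen (q.zAdj z) (Term.var v) (Term.var w))

/-- `φ_{z'}`: the subconjunction of all atoms of `q` mentioning a variable of `z'`. -/
def CQ.subAtoms (q : CQ) (z' : Finset Var) : List QAtom :=
  q.atoms.filter (fun atm => decide (∃ v ∈ z', v ∈ QAtom.vars atm))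

def termsOfList (l : List QAtom) : List Term :=
  l.foldr (fun atm acc => QAtom.terms atm ++ acc) []

/-- `t_{z'}`: all terms occurring in `φ_{z'}` that are not variables of `z`. -/
def CQ.tTerms (q : CQ) (z z' : Finset Var) : List Term :=
  (termsOfList (q.subAtoms z')).filter (fun t => decide (¬ t.IsZVar z))

/-- `atm` is a legitimate choice of `α_{z'}`: an atom of `φ_{z'}` of the form
`P(t,z)` or `P(z,t)` with `z ∈ z'` and the term `t` not a variable of `z`. -/
def IsAlphaFor (q : CQ) (z z' : Finset Var) (atm : QAtom) : Prop :=
  atm ∈ q.subAtoms z' ∧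
  ((∃ P t v, v ∈ z' ∧ ¬ Term.IsZVar t z ∧ atm = QAtom.roleAt P t (Term.var v)) ∨
   (∃ P t v, v ∈ z' ∧ ¬ Term.IsZVar t z ∧ atm = QAtom.roleAt P (Term.var v) t))

def CQ.inds (q : CQ) : List Ind :=
  (termsOfList q.atoms).foldr (fun t acc => t.indsOf ++ acc) []

def CQ.maxInd (q : CQ) : Ind := q.inds.foldr max 0

/-- The individual `a` of `q^a_{z'}`: the individual among `t_{z'}` if one
exists, and a fresh individual otherwise. -/
def freshA (q : CQ) (z z' : Finset Var) : Ind :=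
  if h : ∃ c : Ind, Term.ind c ∈ q.tTerms z z' then h.choose else q.maxInd + 1

/-- A fresh individual `b` (distinct from `freshA`). -/
def freshB (q : CQ) : Ind := q.maxInd + 2

/-- The one-assertion bag ABox `A'` used to test realisability: `{P(a,b)}` if
`α_{z'} = P(t,z)` and `{P(b,a)}` if `α_{z'} = P(z,t)`. -/
def alphaABox (z' : Finset Var) (atm : QAtom) (a b : Ind) : BagABox :=
  match atm with
  | QAtom.roleAt P _ t₂ =>
      if Term.IsZVar t₂ z' then {Assertion.roleA P a b} else {Assertion.roleA P b a}
  | _ => 0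

def subVars (q : CQ) (z' : Finset Var) : List Var :=
  (q.subAtoms z').foldr (fun atm acc => QAtom.vars atm ++ acc) []

/-- The bag answer `(q^a_{z'})^{C(⟨T,A'⟩)}(⟨⟩)` of the Boolean query
`q^a_{z'}() = ∃x'.∃z'. φ_{z'} ∧ ⋀_{t ∈ t_{z'}}(t = a) ∧ ⋀_{z ∈ z'}(z ≠ a)`
over the canonical model of `⟨T,A'⟩`. -/
def realQAnswer (T : TBox) (q : CQ) (z z' : Finset Var) (atm : QAtom) : ℕ∞ :=
  bagSum (fun f : {f : Var → CanElem //
      (∀ v, v ∉ subVars q z' → f v = CanElem.ind 0) ∧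
      (∀ t ∈ q.tTerms z z',
        termVal (canInterp ⟨T, alphaABox z' atm (freshA q z z') (freshB q)⟩) f t
          = CanElem.ind (freshA q z z')) ∧
      ∀ v ∈ z', f v ≠ CanElem.ind (freshA q z z')} =>
    ((q.subAtoms z').map
      (QAtom.mult (canInterp ⟨T, alphaABox z' atm (freshA q z z') (freshB q)⟩) f.1)).prod)

/-- Equality-consistency of `z`: no equality atom `z = t` with `z ∈ z` and `t ∉ z`. -/
def EqConsistent (q : CQ) (z : Finset Var) : Prop :=
  ∀ v t, QAtom.eqAt v t ∈ q.atoms → v ∈ z → Term.IsZVar t z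

/-- The ma-connected subset `z'` is realisable by `T` (w.r.t. the chosen `α_{z'}`). -/
def RealisableMA (T : TBox) (q : CQ) (z z' : Finset Var) (atm : QAtom) : Prop :=
  1 ≤ realQAnswer T q z z' atm

/-- `z` is realisable by `T`: equality-consistent and every nonempty
ma-connected subset of `z` is realisable. -/
def RealisableZ (T : TBox) (q : CQ) (z : Finset Var) (alpha : Finset Var → QAtom) : Prop :=
  EqConsistent q z ∧
  ∀ z' : Finset Var, q.MAConnected z z' → z'.Nonempty → RealisableMA T q z z' (alpha z')

/-- The nonempty ma-connected subsets of `z`. -/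
def maSets (q : CQ) (z : Finset Var) : Finset (Finset Var) :=
  z.powerset.filter (fun z' => q.MAConnected z z' ∧ z'.Nonempty)

def tTermVars (q : CQ) (z z' : Finset Var) : List Var :=
  (q.tTerms z z').foldr (fun t acc => Term.varsOf t ++ acc) []

/-- The equalities identifying all the terms of `t_{z'}`. -/
def eqAtomsFor (q : CQ) (z z' : Finset Var) : List QAtom :=
  (tTermVars q z z').foldr
    (fun v acc => ((q.tTerms z z').map (fun t => QAtom.eqAt v t)) ++ acc) []

/-- Atoms of `q_z`: the atoms of `q` not mentioning a variable of `z`, plus,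
for each nonempty ma-connected `z' ⊆ z`, the atom `α_{z'}` together with the
equalities identifying the terms of `t_{z'}`. -/
def qzAtoms (q : CQ) (z : Finset Var) (alpha : Finset Var → QAtom) : List QAtom :=
  q.atoms.filter (fun atm => decide (¬ ∃ v ∈ z, v ∈ QAtom.vars atm))
    ++ (maSets q z).toList.foldr (fun z' acc => alpha z' :: (eqAtomsFor q z z' ++ acc)) []

/-- The CQ `q_z(x) = ∃y'. φ_z(x,y')`. -/
def qz (q : CQ) (z : Finset Var) (alpha : Finset Var → QAtom) : CQ where
  answerVars := q.answerVars
  existVars := q.existVars.filter (fun v => decide (∃ atm ∈ qzAtoms q z alpha, v ∈ QAtom.vars atm))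
  atoms := qzAtoms q z alpha

/- ## The BALG rewriting `q̄` -/

/-- Value of an atom of `q_z` after the rewriting step 3 (`chasing back'' with
the TBox): concept atoms `A(t)` become `⋁_{T ⊨ C ⊑ A} ζ_C(t)`, role atoms with a
`z`-variable become the corresponding truncated difference, and the remaining
atoms are evaluated as before. -/
def rewAtomVal (T : TBox) (I : BagInterp) (z : Finset Var) (f : Var → I.Δ) : QAtom → ℕ∞
  | QAtom.conceptAt A t => cclI T I (DLConcept.atomic A) (termVal I f t)
  | QAtom.roleAt P t₁ t₂ =>
      if Term.IsZVar t₂ z then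
        cclI T I (DLConcept.ex (Role.atomic P)) (termVal I f t₁)
          - I.conceptMult (DLConcept.ex (Role.atomic P)) (termVal I f t₁)
      else if Term.IsZVar t₁ z then
        cclI T I (DLConcept.ex (Role.inv P)) (termVal I f t₂)
          - I.conceptMult (DLConcept.ex (Role.inv P)) (termVal I f t₂)
      else I.rI P (termVal I f t₁) (termVal I f t₂)
  | QAtom.eqAt v t => if f v = termVal I f t then 1 else 0

/-- Bag answers of the BALG query `q̄_z`, obtained from `q_z` by projecting only
the variables of `y' ∖ z` and replacing atoms as in `rewAtomVal`. -/
def rewAnswer (T : TBox) (qq : CQ) (z : Finset Var) (I : BagInterp) (a : List Ind) : ℕ∞ :=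
  bagSum (fun f : {f : Var → I.Δ //
      (∀ v, v ∉ qq.answerVars ++ qq.existVars.filter (fun u => decide (u ∉ z)) →
        f v = I.indMap 0) ∧
      qq.answerVars.map f = a.map I.indMap} =>
    (qq.atoms.map (rewAtomVal T I z f.1)).prod)

/- ## BALG¹_ε queries -/

def Term.fvars (t : Term) : Finset Var :=
  match t with
  | Term.var v => {v}
  | Term.ind _ => ∅

/-- Syntax of BALG¹_ε queries. -/
inductive BQuery where
  | atomC : AtomicConcept → Term → BQuery
  | atomR : AtomicRole → Term → Term → BQuery
  | conj : BQuery → BQuery → BQuery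
  | eqSel : BQuery → Var → Term → BQuery
  | proj : List Var → BQuery → BQuery
  | maxU : BQuery → BQuery → BQuery
  | arithU : BQuery → BQuery → BQuery
  | diff : BQuery → BQuery → BQuery

/-- Answer variables of a BALG¹_ε query. -/
def BQuery.fv : BQuery → Finset Var
  | BQuery.atomC _ t => t.fvars
  | BQuery.atomR _ t₁ t₂ => t₁.fvars ∪ t₂.fvars
  | BQuery.conj q₁ q₂ => q₁.fv ∪ q₂.fv
  | BQuery.eqSel q _ t => q.fv ∪ t.fvars
  | BQuery.proj ys q => q.fv \ ys.toFinset
  | BQuery.maxU q₁ _ => q₁.fv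
  | BQuery.arithU q₁ _ => q₁.fv
  | BQuery.diff q₁ _ => q₁.fv

/-- Well-formedness of BALG¹_ε queries. -/
def BQuery.WF : BQuery → Prop
  | BQuery.atomC _ _ => True
  | BQuery.atomR _ _ _ => True
  | BQuery.conj q₁ q₂ => q₁.WF ∧ q₂.WF
  | BQuery.eqSel q x _ => q.WF ∧ x ∈ q.fv
  | BQuery.proj _ q => q.WF
  | BQuery.maxU q₁ q₂ => q₁.WF ∧ q₂.WF ∧ q₁.fv = q₂.fv
  | BQuery.arithU q₁ q₂ => q₁.WF ∧ q₂.WF ∧ q₁.fv = q₂.fv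
  | BQuery.diff q₁ q₂ => q₁.WF ∧ q₂.WF ∧ q₁.fv = q₂.fv

/-- Semantics of BALG¹_ε queries under a valuation of the answer variables. -/
def BQuery.val (I : BagInterp) : BQuery → (Var → I.Δ) → ℕ∞
  | BQuery.atomC A t, f => I.cI A (termVal I f t)
  | BQuery.atomR P t₁ t₂, f => I.rI P (termVal I f t₁) (termVal I f t₂)
  | BQuery.conj q₁ q₂, f => q₁.val I f * q₂.val I f
  | BQuery.eqSel q x t, f => if f x = termVal I f t then q.val I f else 0
  | BQuery.proj ys q, f => bagSum (fun g : {g : Var → I.Δ // ∀ v, v ∉ ys → g v = f v} => q.val I g.1)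
  | BQuery.maxU q₁ q₂, f => max (q₁.val I f) (q₂.val I f)
  | BQuery.arithU q₁ q₂, f => q₁.val I f + q₂.val I f
  | BQuery.diff q₁ q₂, f => q₁.val I f - q₂.val I f

/-- Bag answers of a BALG¹_ε query with answer variables `xs` on a tuple `a`. -/
def BQuery.answer (Q : BQuery) (xs : List Var) (I : BagInterp) (a : List Ind) : ℕ∞ :=
  if a.length = xs.length then Q.val I (fun v => I.indMap (a.getD (xs.idxOf v) 0)) else 0

/- ## Enumerated bags, e-homomorphisms, and e-valuations -/

/-- Enumerated copies of a bag of domain elements (for an atomic concept). -/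
def EBagC (I : BagInterp) (A : AtomicConcept) : Type :=
  {p : I.Δ × ℕ // 1 ≤ p.2 ∧ (p.2 : ℕ∞) ≤ I.cI A p.1}

/-- Enumerated copies of a bag of pairs (for an atomic role). -/
def EBagR (I : BagInterp) (P : AtomicRole) : Type :=
  {p : (I.Δ × I.Δ) × ℕ // 1 ≤ p.2 ∧ (p.2 : ℕ∞) ≤ I.rI P p.1.1 p.1.2}

/-- An e-homomorphism between the enumerated versions of two bag interpretations. -/
structure EHom (I J : BagInterp) where
  h : I.Δ → J.Δ
  hInd : ∀ a : Ind, h (I.indMap a) = J.indMap a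
  hC : ∀ A : AtomicConcept, EBagC I A → EBagC J A
  hC_fst : ∀ (A : AtomicConcept) (x : EBagC I A), (hC A x).1.1 = h x.1.1
  hR : ∀ P : AtomicRole, EBagR I P → EBagR J P
  hR_fst : ∀ (P : AtomicRole) (x : EBagR I P), (hR P x).1.1 = (h x.1.1.1, h x.1.1.2)

/-- Predicate-injectivity on individuals of an e-homomorphism. -/
def EHom.PredInj {I J : BagInterp} (e : EHom I J) : Prop :=
  ∀ u : I.Δ, (∃ a : Ind, e.h u = J.indMap a) →
    (∀ A : AtomicConcept, ∀ x y : EBagC I A,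
      x.1.1 = u → y.1.1 = u → x.1.2 ≠ y.1.2 → e.hC A x ≠ e.hC A y) ∧
    (∀ P : AtomicRole, ∀ x y : EBagR I P, x.1.1.1 = u → y.1.1.1 = u →
      (x.1.1.2, x.1.2) ≠ (y.1.1.2, y.1.2) → e.hR P x ≠ e.hR P y) ∧
    (∀ P : AtomicRole, ∀ x y : EBagR I P, x.1.1.2 = u → y.1.1.2 = u →
      (x.1.1.1, x.1.2) ≠ (y.1.1.1, y.1.2) → e.hR P x ≠ e.hR P y)

/-- Enumerated atoms of a CQ (seen as a bag of atoms). -/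
def EAtom (q : CQ) : Type := {p : QAtom × ℕ // 1 ≤ p.2 ∧ p.2 ≤ q.atoms.count p.1}

/-- An e-valuation of the enumerated query `q^e` over the enumerated
interpretation `I^e`. -/
structure EVal (q : CQ) (I : BagInterp) where
  ν : Var → I.Δ
  hjunk : ∀ v, v ∉ q.vars → ν v = I.indMap 0
  heq : ∀ z t, QAtom.eqAt z t ∈ q.atoms → ν z = termVal I ν t
  ℓ : EAtom q → ℕ
  hone : ∀ e : EAtom q, 1 ≤ ℓ e
  hconcept : ∀ (e : EAtom q) (A : AtomicConcept) (t : Term),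
    e.1.1 = QAtom.conceptAt A t → (ℓ e : ℕ∞) ≤ I.cI A (termVal I ν t)
  hrole : ∀ (e : EAtom q) (P : AtomicRole) (t₁ t₂ : Term),
    e.1.1 = QAtom.roleAt P t₁ t₂ → (ℓ e : ℕ∞) ≤ I.rI P (termVal I ν t₁) (termVal I ν t₂)
  heqm : ∀ (e : EAtom q) (z : Var) (t : Term), e.1.1 = QAtom.eqAt z t → ℓ e = 1

/-- The tuple of domain elements to which an e-atom is sent by an e-valuation. -/
def EVal.imgTerms {q : CQ} {I : BagInterp} (ev : EVal q I) (e : EAtom q) : List I.Δ :=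
  (QAtom.terms e.1.1).map (termVal I ev.ν)

/-- The enumerated image of an e-atom under an e-valuation. -/
def EVal.img {q : CQ} {I : BagInterp} (ev : EVal q I) (e : EAtom q) : List I.Δ × ℕ :=
  (ev.imgTerms e, ev.ℓ e)

/- ## Auxiliary concrete queries -/

/-- The CQ `ζ_C(x)`: `A(x)`, `∃y.P(x,y)` or `∃y.P(y,x)`. -/
def zetaCQ : DLConcept → CQ
  | DLConcept.atomic A => ⟨[0], [], [QAtom.conceptAt A (Term.var 0)]⟩
  | DLConcept.ex (Role.atomic P) => ⟨[0], [1], [QAtom.roleAt P (Term.var 0) (Term.var 1)]⟩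
  | DLConcept.ex (Role.inv P) => ⟨[0], [1], [QAtom.roleAt P (Term.var 1) (Term.var 0)]⟩

/-- The CQ `q(x) = R(x,x)`. -/
def selfCQ (P : AtomicRole) : CQ := ⟨[0], [], [QAtom.roleAt P (Term.var 0) (Term.var 0)]⟩


/-!
The homomorphism follows the tree structure of the canonical model. Individuals go to their
interpretations, and the `j`-th anonymous `R`-child of `u` goes to the `j`-th `R`-successor of
the image of `u` that is not reserved for an ABox edge of `u` or for the edge from `u` to its
parent; so the enumerated edges leaving `u` go injectively to enumerated successors of its
image. Enough unreserved successors exist because, by induction on the stages, the map is a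
homomorphism of each stage, so the number `ccl(u)(∃R) - (∃R)(u)` of `R`-children created at `u`
in one step is at most `(∃R)^I(h u)` minus the number of reserved successors. Bounding `ccl`
uses that a bag model of a core TBox satisfies each inclusion the TBox entails under set
semantics: such an entailment follows from a chain of inclusions or from the unsatisfiability
of its left-hand side, as a countermodel whose elements are concepts shows.
-/

section Bags

variable {α β : Type*}

/-- The e-bag `Ω^e` of a bag `Ω`. -/
def ebag (f : α → ℕ∞) : Set (α × ℕ) := {p | 1 ≤ p.2 ∧ (p.2 : ℕ∞) ≤ f p.1}

lemma encard_setOf_one_le_le (n : ℕ∞) : {k : ℕ | 1 ≤ k ∧ (k : ℕ∞) ≤ n}.encard = n := by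
  cases n with
  | top =>
    have h : {k : ℕ | 1 ≤ k ∧ (k : ℕ∞) ≤ ⊤} = Set.Ici 1 := by ext k; simp
    rw [h, Set.encard_eq_top_iff]
    exact Set.Ici_infinite 1
  | coe n =>
    have h : {k : ℕ | 1 ≤ k ∧ (k : ℕ∞) ≤ n} = ↑(Finset.Icc 1 n) := by ext k; simp
    rw [h, Set.encard_coe_eq_coe_finsetCard]
    simp

lemma encard_ebag_fst_eq (f : α → ℕ∞) (a : α) : {p ∈ ebag f | p.1 = a}.encard = f a := by
  have h : {p ∈ ebag f | p.1 = a} = Prod.mk a '' {k : ℕ | 1 ≤ k ∧ (k : ℕ∞) ≤ f a} := by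
    ext ⟨x, k⟩
    simp only [ebag, Set.mem_ofPred_eq, Set.mem_image, Prod.mk.injEq]
    constructor
    · rintro ⟨hk, rfl⟩; exact ⟨k, hk, rfl, rfl⟩
    · rintro ⟨k, hk, rfl, rfl⟩; exact ⟨hk, rfl⟩
  rw [h, (Prod.mk_right_injective a).encard_image, encard_setOf_one_le_le]

lemma encard_ebag_fst_mem (f : α → ℕ∞) (s : Finset α) :
    {p ∈ ebag f | p.1 ∈ s}.encard = ∑ x ∈ s, f x := by
  induction s using Finset.induction with
  | empty => simp
  | insert a s ha ih =>
    have hsplit : {p ∈ ebag f | p.1 ∈ insert a s} =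
        {p ∈ ebag f | p.1 = a} ∪ {p ∈ ebag f | p.1 ∈ s} := by
      ext p; simp [and_or_left]
    have hdisj : Disjoint {p ∈ ebag f | p.1 = a} {p ∈ ebag f | p.1 ∈ s} :=
      Set.disjoint_left.mpr fun p hp hp' => ha (hp.2 ▸ hp'.2)
    rw [hsplit, Set.encard_union_eq hdisj, encard_ebag_fst_eq, ih, Finset.sum_insert ha]

theorem bagSum_eq_encard_ebag (f : α → ℕ∞) : bagSum f = (ebag f).encard := by
  refine le_antisymm (iSup_le fun s => ?_) (ENat.forall_natCast_le_iff_le.mp fun n hn => ?_)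
  · rw [← encard_ebag_fst_mem]
    exact Set.encard_le_encard fun p hp => hp.1
  · obtain ⟨t, hts, htn⟩ := Set.exists_subset_encard_eq hn
    have ht : t.Finite := Set.finite_of_encard_eq_coe htn
    calc (n : ℕ∞) = t.encard := htn.symm
      _ ≤ {p ∈ ebag f | p.1 ∈ ht.toFinset.image Prod.fst}.encard :=
        Set.encard_le_encard fun p hp => ⟨hts hp, by simpa using ⟨p.2, hp⟩⟩
      _ = ∑ x ∈ ht.toFinset.image Prod.fst, f x := encard_ebag_fst_mem f _
      _ ≤ bagSum f := le_iSup (fun s : Finset α => ∑ x ∈ s, f x) _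

lemma le_bagSum (f : α → ℕ∞) (a : α) : f a ≤ bagSum f := by
  unfold bagSum
  simpa using le_iSup (fun s : Finset α => ∑ x ∈ s, f x) {a}

lemma bagSum_eq_zero {f : α → ℕ∞} (h : ∀ a, f a = 0) : bagSum f = 0 := by
  simp [bagSum, h]

lemma bagSum_le_bagSum_of_injOn {f : α → ℕ∞} {g : β → ℕ∞} (φ : α × ℕ → β × ℕ)
    (hmaps : Set.MapsTo φ (ebag f) (ebag g)) (hinj : Set.InjOn φ (ebag f)) :
    bagSum f ≤ bagSum g := by
  rw [bagSum_eq_encard_ebag, bagSum_eq_encard_ebag, ← hinj.encard_image]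
  exact Set.encard_le_encard hmaps.image_subset

lemma Set.exists_enumeration [Nonempty α] (S : Set α) :
    ∃ w : ℕ → α, Set.MapsTo w {j | (j : ℕ∞) < S.encard} S ∧
      Set.InjOn w {j | (j : ℕ∞) < S.encard} := by
  by_cases hS : S.Finite
  · obtain ⟨n, hn⟩ : ∃ n : ℕ, S.encard = n := ⟨_, hS.cast_ncard_eq.symm⟩
    have hdom : {j : ℕ | (j : ℕ∞) < S.encard} = ↑(Finset.range n) := by ext j; simp [hn]
    rw [hdom]
    refine (Finset.range n).finite_toSet.exists_injOn_of_encard_le ?_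
    rw [Set.encard_coe_eq_coe_finsetCard, hn, Finset.card_range]
  · let e := Set.Infinite.natEmbedding S hS
    exact ⟨fun j => e j, fun j _ => (e j).2, fun a _ b _ h => e.injective (Subtype.ext h)⟩

def Set.enumeration [Nonempty α] (S : Set α) : ℕ → α := S.exists_enumeration.choose

lemma Set.mapsTo_enumeration [Nonempty α] (S : Set α) :
    Set.MapsTo S.enumeration {j | (j : ℕ∞) < S.encard} S :=
  S.exists_enumeration.choose_spec.1

lemma Set.injOn_enumeration [Nonempty α] (S : Set α) :
    Set.InjOn S.enumeration {j | (j : ℕ∞) < S.encard} :=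
  S.exists_enumeration.choose_spec.2

end Bags

section Entailment

def Role.flip : Role → Role
  | Role.atomic P => Role.inv P
  | Role.inv P => Role.atomic P

@[simp] lemma Role.flip_flip (R : Role) : R.flip.flip = R := by cases R <;> rfl

lemma BagInterp.roleMult_flip (I : BagInterp) (R : Role) (u v : I.Δ) :
    I.roleMult R.flip u v = I.roleMult R v u := by
  cases R <;> rfl

def TBox.Derives (T : TBox) : DLConcept → DLConcept → Prop :=
  Relation.ReflTransGen fun C D => TBoxAxiom.cIncl C D ∈ T

inductive TBox.Unsat (T : TBox) : DLConcept → Prop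
  | disj {C D D'} : T.Derives C D → T.Derives C D' → TBoxAxiom.cDisj D D' ∈ T → T.Unsat C
  | role {C R} : T.Derives C (DLConcept.ex R) → T.Unsat (DLConcept.ex R.flip) → T.Unsat C

variable {T : TBox}

lemma TBox.Derives.conceptMult_le {I : BagInterp} (hT : ∀ ax ∈ T, I.SatisfiesAx ax)
    {C D : DLConcept} (h : T.Derives C D) (u : I.Δ) :
    I.conceptMult C u ≤ I.conceptMult D u := by
  induction h with
  | refl => exact le_rfl
  | tail _ hax ih => exact ih.trans (hT _ hax u)

lemma TBox.Unsat.conceptMult_eq_zero {I : BagInterp} (hT : ∀ ax ∈ T, I.SatisfiesAx ax)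
    {C : DLConcept} (h : T.Unsat C) (u : I.Δ) : I.conceptMult C u = 0 := by
  induction h generalizing u with
  | disj hD hD' hax =>
    rcases min_eq_iff.mp (hT _ hax u) with ⟨h0, -⟩ | ⟨h0, -⟩
    · exact nonpos_iff_eq_zero.mp (h0 ▸ hD.conceptMult_le hT u)
    · exact nonpos_iff_eq_zero.mp (h0 ▸ hD'.conceptMult_le hT u)
  | @role C R hR _ ih =>
    have hzero : I.conceptMult (DLConcept.ex R) u = 0 := bagSum_eq_zero fun v =>
      nonpos_iff_eq_zero.mp <| by
        rw [← I.roleMult_flip]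
        exact (le_bagSum _ u).trans (ih v).le
    exact nonpos_iff_eq_zero.mp (hzero ▸ hR.conceptMult_le hT u)

/-- The countermodel whose elements are the satisfiable concepts `E` (besides the individuals),
with `E` in the extension of every concept derivable from it; the element `∃R⁻` is the common
`R`-successor of all elements of `∃R`. -/
def TBox.typeModel (T : TBox) : SetInterp where
  Δ := DLConcept ⊕ Ind
  dne := ⟨Sum.inr 0⟩
  indMap := Sum.inr
  indInj := Sum.inr_injective
  cI A := {x | ∃ E, x = Sum.inl E ∧ ¬T.Unsat E ∧ T.Derives E (DLConcept.atomic A)}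
  rI P := {p | (∃ E, ¬T.Unsat E ∧ T.Derives E (DLConcept.ex (Role.atomic P)) ∧
                  p = (Sum.inl E, Sum.inl (DLConcept.ex (Role.inv P)))) ∨
               (∃ E, ¬T.Unsat E ∧ T.Derives E (DLConcept.ex (Role.inv P)) ∧
                  p = (Sum.inl (DLConcept.ex (Role.atomic P)), Sum.inl E))}

lemma TBox.mem_typeModel_conceptSet {x : T.typeModel.Δ} {C : DLConcept} :
    x ∈ T.typeModel.conceptSet C ↔ ∃ E, x = Sum.inl E ∧ ¬T.Unsat E ∧ T.Derives E C := by
  rcases C with A | (P | P)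
  · rfl
  · constructor
    · rintro ⟨y, ⟨E, hE, hEC, heq⟩ | ⟨E, hE, hEC, heq⟩⟩
      · exact ⟨E, congrArg Prod.fst heq, hE, hEC⟩
      · refine ⟨_, congrArg Prod.fst heq, fun hu => hE (.role hEC hu), .refl⟩
    · rintro ⟨E, rfl, hE, hEC⟩
      exact ⟨_, .inl ⟨E, hE, hEC, rfl⟩⟩
  · constructor
    · rintro ⟨y, ⟨E, hE, hEC, heq⟩ | ⟨E, hE, hEC, heq⟩⟩
      · refine ⟨_, congrArg Prod.snd heq, fun hu => hE (.role hEC hu), .refl⟩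
      · exact ⟨E, congrArg Prod.snd heq, hE, hEC⟩
    · rintro ⟨E, rfl, hE, hEC⟩
      exact ⟨_, .inr ⟨E, hE, hEC, rfl⟩⟩

lemma TBox.typeModel_satisfiesAx (hcore : T.IsCore) :
    ∀ ax ∈ T, T.typeModel.SatisfiesAx ax := by
  intro ax hax
  rcases hcore ax hax with ⟨C, D, rfl⟩ | ⟨C, D, rfl⟩
  · intro x hx
    obtain ⟨E, rfl, hE, hEC⟩ := mem_typeModel_conceptSet.mp hx
    exact mem_typeModel_conceptSet.mpr ⟨E, rfl, hE, hEC.tail hax⟩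
  · refine Set.eq_empty_of_forall_notMem fun x ⟨hC, hD⟩ => ?_
    obtain ⟨E, rfl, hE, hEC⟩ := mem_typeModel_conceptSet.mp hC
    obtain ⟨E', hEE', -, hE'D⟩ := mem_typeModel_conceptSet.mp hD
    cases hEE'
    exact hE (.disj hEC hE'D hax)

theorem TBox.derives_or_unsat_of_entailsCI (hcore : T.IsCore) {C D : DLConcept}
    (h : T.EntailsCI C D) : T.Derives C D ∨ T.Unsat C := by
  by_contra! hCD
  have hC : Sum.inl C ∈ T.typeModel.conceptSet C :=
    mem_typeModel_conceptSet.mpr ⟨C, rfl, hCD.2, .refl⟩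
  obtain ⟨E, hE, -, hED⟩ := mem_typeModel_conceptSet.mp (h _ (typeModel_satisfiesAx hcore) hC)
  cases hE
  exact hCD.1 hED

theorem BagInterp.conceptMult_le_of_entailsCI (hcore : T.IsCore) {I : BagInterp}
    (hT : ∀ ax ∈ T, I.SatisfiesAx ax) {C D : DLConcept} (h : T.EntailsCI C D) (u : I.Δ) :
    I.conceptMult C u ≤ I.conceptMult D u := by
  rcases T.derives_or_unsat_of_entailsCI hcore h with hD | hU
  · exact hD.conceptMult_le hT u
  · exact (hU.conceptMult_eq_zero hT u).trans_le bot_le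

end Entailment

section CanonicalModel

def CanElem.depth : CanElem → ℕ
  | CanElem.ind _ => 0
  | CanElem.anon u _ _ => u.depth + 1

lemma CanElem.ne_anon_of_eq_anon {u v : CanElem} {R R' : Role} {j j' : ℕ}
    (h : u = CanElem.anon v R' j') : v ≠ CanElem.anon u R j := by
  rintro rfl
  have := congrArg CanElem.depth h
  simp only [CanElem.depth] at this
  omega

variable {K : Ontology}

lemma canStage_active_mono : Monotone fun i => (canStage K i).active :=
  monotone_nat_of_le_succ fun _ => Set.subset_union_left

lemma ind_mem_canStage_active (a : Ind) (i : ℕ) : CanElem.ind a ∈ (canStage K i).active :=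
  canStage_active_mono (Nat.zero_le i) ⟨a, rfl⟩

lemma anon_notMem_canStage_active_zero {u : CanElem} {R : Role} {j : ℕ} :
    CanElem.anon u R j ∉ (canStage K 0).active := by
  rintro ⟨a, ⟨⟩⟩

lemma PreInterp.newAnon_anon_iff {P : PreInterp} {T : TBox} {u : CanElem} {R : Role} {j : ℕ} :
    P.NewAnon T (CanElem.anon u R j) ↔ u ∈ P.active ∧ (j : ℕ∞) < P.delta T u R := by
  constructor
  · rintro ⟨u', R', j', heq, hu, hj⟩
    cases heq
    exact ⟨hu, hj⟩
  · rintro ⟨hu, hj⟩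
    exact ⟨u, R, j, rfl, hu, hj⟩

lemma anon_mem_canStage_active_succ_iff {i : ℕ} {u : CanElem} {R : Role} {j : ℕ} :
    CanElem.anon u R j ∈ (canStage K (i + 1)).active ↔
      CanElem.anon u R j ∈ (canStage K i).active ∨
        (u ∈ (canStage K i).active ∧ (j : ℕ∞) < (canStage K i).delta K.tbox u R) :=
  or_congr Iff.rfl PreInterp.newAnon_anon_iff

lemma mem_canStage_active_of_anon_mem {u : CanElem} {R : Role} {j : ℕ} :
    ∀ {i : ℕ}, CanElem.anon u R j ∈ (canStage K i).active → u ∈ (canStage K i).active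
  | 0, h => absurd h anon_notMem_canStage_active_zero
  | i + 1, h => by
    rcases anon_mem_canStage_active_succ_iff.mp h with h | h
    · exact Set.subset_union_left (mem_canStage_active_of_anon_mem h)
    · exact Set.subset_union_left h.1

variable (K)

def canDomain : Set CanElem := ⋃ i, (canStage K i).active

def IsTreeEdge (S : Set CanElem) (R : Role) (u v : CanElem) : Prop :=
  (∃ j, v = CanElem.anon u R j ∧ v ∈ S) ∨ (∃ j, u = CanElem.anon v R.flip j ∧ u ∈ S)

def aboxRoleMult : Role → Ind → Ind → ℕ∞
  | Role.atomic P, a, b => BagABox.mult K.abox (Assertion.roleA P a b)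
  | Role.inv P, a, b => BagABox.mult K.abox (Assertion.roleA P b a)

def baseRoleMult (R : Role) : CanElem → CanElem → ℕ∞
  | CanElem.ind a, CanElem.ind b => aboxRoleMult K R a b
  | _, _ => 0

def treeRoleMult (S : Set CanElem) (R : Role) (u v : CanElem) : ℕ∞ :=
  baseRoleMult K R u v + if IsTreeEdge S R u v then 1 else 0

variable {K}

lemma isTreeEdge_flip {S : Set CanElem} {R : Role} {u v : CanElem} :
    IsTreeEdge S R.flip v u ↔ IsTreeEdge S R u v := by
  rw [IsTreeEdge, IsTreeEdge, Role.flip_flip, or_comm]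

lemma baseRoleMult_flip (R : Role) (u v : CanElem) :
    baseRoleMult K R.flip v u = baseRoleMult K R u v := by
  cases u <;> cases v <;> cases R <;> rfl

lemma treeRoleMult_flip (S : Set CanElem) (R : Role) (u v : CanElem) :
    treeRoleMult K S R.flip v u = treeRoleMult K S R u v := by
  simp only [treeRoleMult, baseRoleMult_flip, isTreeEdge_flip]

@[simp] lemma baseRoleMult_anon_left (R : Role) (w : CanElem) (R' : Role) (j : ℕ)
    (v : CanElem) : baseRoleMult K R (CanElem.anon w R' j) v = 0 := by
  cases v <;> rfl

@[simp] lemma baseRoleMult_anon_right (R : Role) (u w : CanElem) (R' : Role) (j : ℕ) :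
    baseRoleMult K R u (CanElem.anon w R' j) = 0 := by
  cases u <;> rfl

lemma baseRoleMult_eq_zero_of_not_mem {i : ℕ} {R : Role} {u v : CanElem}
    (h : ¬(u ∈ (canStage K i).active ∧ v ∈ (canStage K i).active)) :
    baseRoleMult K R u v = 0 := by
  cases u <;> cases v <;> first
    | rfl | exact absurd ⟨ind_mem_canStage_active _ i, ind_mem_canStage_active _ i⟩ h

lemma isTreeEdge_canStage_succ_iff_of_mem {i : ℕ} {R : Role} {u v : CanElem}
    (h : u ∈ (canStage K i).active ∧ v ∈ (canStage K i).active) :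
    IsTreeEdge (canStage K (i + 1)).active R u v ↔
      IsTreeEdge (canStage K i).active R u v := by
  refine ⟨?_, Or.imp (.imp fun _ => .imp_right .inl) (.imp fun _ => .imp_right .inl)⟩
  rintro (⟨j, rfl, -⟩ | ⟨j, rfl, -⟩)
  · exact .inl ⟨j, rfl, h.2⟩
  · exact .inr ⟨j, rfl, h.1⟩

lemma isTreeEdge_canStage_succ_iff_of_not_mem {i : ℕ} {P : AtomicRole} {u v : CanElem}
    (h : ¬(u ∈ (canStage K i).active ∧ v ∈ (canStage K i).active)) :
    IsTreeEdge (canStage K (i + 1)).active (Role.atomic P) u v ↔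
      (∃ j, v = CanElem.anon u (Role.atomic P) j ∧ (canStage K i).NewAnon K.tbox v) ∨
      (∃ j, u = CanElem.anon v (Role.inv P) j ∧ (canStage K i).NewAnon K.tbox u) := by
  refine or_congr (exists_congr fun j => and_congr_right fun hv => ?_)
    (exists_congr fun j => and_congr_right fun hu => ?_)
  · subst hv
    refine ⟨fun hmem => hmem.resolve_left fun hv => h ⟨?_, hv⟩, .inr⟩
    exact mem_canStage_active_of_anon_mem hv
  · subst hu
    refine ⟨fun hmem => hmem.resolve_left fun hu => h ⟨hu, ?_⟩, .inr⟩
    exact mem_canStage_active_of_anon_mem hu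

lemma canStage_r_eq (i : ℕ) (P : AtomicRole) (u v : CanElem) :
    (canStage K i).r P u v = treeRoleMult K (canStage K i).active (Role.atomic P) u v := by
  induction i with
  | zero =>
    have hno : ¬IsTreeEdge (canStage K 0).active (Role.atomic P) u v := by
      rintro (⟨j, rfl, h⟩ | ⟨j, rfl, h⟩) <;> exact anon_notMem_canStage_active_zero h
    rw [treeRoleMult, if_neg hno, add_zero]
    cases u <;> cases v <;> rfl
  | succ k ih =>
    change (if _ then _ else _) = _
    by_cases hb : u ∈ (canStage K k).active ∧ v ∈ (canStage K k).active
    · rw [if_pos hb, ih, treeRoleMult, treeRoleMult, isTreeEdge_canStage_succ_iff_of_mem hb]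
    · rw [if_neg hb, treeRoleMult, baseRoleMult_eq_zero_of_not_mem hb, zero_add,
        isTreeEdge_canStage_succ_iff_of_not_mem hb]
      by_cases hchild : ∃ j, v = CanElem.anon u (Role.atomic P) j ∧
          (canStage K k).NewAnon K.tbox v
      · rw [if_pos hchild, if_pos (.inl hchild)]
      · simp only [hchild, false_or, if_false]

lemma canStage_roleMult_eq (i : ℕ) (R : Role) (u v : CanElem) :
    (canStage K i).toInterp.roleMult R u v = treeRoleMult K (canStage K i).active R u v := by
  cases R with
  | atomic P => exact canStage_r_eq i P u v
  | inv P => exact (canStage_r_eq i P v u).trans (treeRoleMult_flip _ (Role.inv P) u v)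

lemma canInterp_roleMult_eq (R : Role) (u v : CanElem) :
    (canInterp K).roleMult R u v = treeRoleMult K (canDomain K) R u v := by
  have hsup : (canInterp K).roleMult R u v = ⨆ i, (canStage K i).toInterp.roleMult R u v := by
    cases R <;> rfl
  have htree :
      IsTreeEdge (canDomain K) R u v ↔ ∃ i, IsTreeEdge (canStage K i).active R u v := by
    simp only [IsTreeEdge, canDomain, Set.mem_iUnion]
    grind
  simp only [hsup, canStage_roleMult_eq, treeRoleMult, ← ENat.add_iSup, htree]
  congr 1
  split_ifs with h
  · obtain ⟨i, hi⟩ := h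
    exact le_antisymm (iSup_le fun _ => by split_ifs <;> simp) (le_iSup_of_le i (by simp [hi]))
  · push Not at h
    simp [h]

lemma mem_ebag_treeRoleMult {S : Set CanElem} {R : Role} {u v : CanElem} {m : ℕ}
    (h : (v, m) ∈ ebag (treeRoleMult K S R u)) :
    (∃ a b, u = CanElem.ind a ∧ v = CanElem.ind b ∧ (m : ℕ∞) ≤ aboxRoleMult K R a b) ∨
    (∃ j, v = CanElem.anon u R j ∧ v ∈ S ∧ m = 1) ∨
    (∃ j, u = CanElem.anon v R.flip j ∧ u ∈ S ∧ m = 1) := by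
  obtain ⟨hm, hle⟩ := h
  simp only [treeRoleMult] at hle
  by_cases he : IsTreeEdge S R u v
  · rw [if_pos he] at hle
    rcases he with ⟨j, rfl, hS⟩ | ⟨j, rfl, hS⟩ <;>
      simp only [baseRoleMult_anon_left, baseRoleMult_anon_right, zero_add,
        Nat.cast_le_one] at hle
    · exact .inr (.inl ⟨j, rfl, hS, by omega⟩)
    · exact .inr (.inr ⟨j, rfl, hS, by omega⟩)
  · rw [if_neg he, add_zero] at hle
    left
    cases u <;> cases v <;>
      simp only [baseRoleMult, nonpos_iff_eq_zero, Nat.cast_eq_zero] at hle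
    all_goals first | omega | exact ⟨_, _, rfl, rfl, hle⟩

lemma mem_ebag_treeRoleMult_child {S : Set CanElem} {R : Role} {u : CanElem} {j m : ℕ}
    (h : (CanElem.anon u R j, m) ∈ ebag (treeRoleMult K S R u)) :
    CanElem.anon u R j ∈ S ∧ m = 1 := by
  rcases mem_ebag_treeRoleMult h with ⟨_, _, -, ⟨⟩, -⟩ | ⟨_, hj, hS, rfl⟩ | ⟨_, hu, -⟩
  · exact ⟨hj ▸ hS, rfl⟩
  · exact absurd hu (CanElem.ne_anon_of_eq_anon rfl)

end CanonicalModel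

section Homomorphism

instance (I : BagInterp) : Nonempty I.Δ := I.dne

variable (K : Ontology) (I : BagInterp)

def succEBag (d : I.Δ) (R : Role) : Set (I.Δ × ℕ) := ebag (I.roleMult R d)

def aboxSuccImage (a : Ind) (R : Role) : Set (I.Δ × ℕ) :=
  (fun p : Ind × ℕ => (I.indMap p.1, p.2)) '' ebag (aboxRoleMult K R a)

/-- The image of an element of the canonical model and, for each role, the enumerated
successors of that image already taken by ABox edges or by the edge to the parent. -/
structure NodeImage where
  point : I.Δ
  reserved : Role → Set (I.Δ × ℕ)

variable {I} in
def NodeImage.spare (x : NodeImage I) (R : Role) : ℕ∞ :=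
  (succEBag I x.point R \ x.reserved R).encard

variable {I} in
def NodeImage.fresh (x : NodeImage I) (R : Role) : ℕ → I.Δ × ℕ :=
  (succEBag I x.point R \ x.reserved R).enumeration

/-- The `j`-th anonymous `R`-child of `w` goes to the `j`-th unreserved `R`-successor of the
image of `w`; the edge back to its parent is then reserved. -/
def nodeImage : CanElem → NodeImage I
  | CanElem.ind a => ⟨I.indMap a, aboxSuccImage K I a⟩
  | CanElem.anon w R j =>
    ⟨((nodeImage w).fresh R j).1,
      fun R' => if R' = R.flip then {((nodeImage w).point, ((nodeImage w).fresh R j).2)}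
        else ∅⟩

def canMap (u : CanElem) : I.Δ := (nodeImage K I u).point

def HasFreshImage : CanElem → Prop
  | CanElem.ind _ => True
  | CanElem.anon w R j => (j : ℕ∞) < (nodeImage K I w).spare R

/-- The edge between `w` and its `j`-th `R`-child is numbered, seen from either end, like the
`j`-th fresh `R`-successor of the image of `w`; ABox edges keep their number `m`. -/
def edgeLabel (u : CanElem) (R : Role) (v : CanElem) (m : ℕ) : ℕ :=
  if h : ∃ j, v = CanElem.anon u R j then ((nodeImage K I u).fresh R h.choose).2
  else if h' : ∃ j, u = CanElem.anon v R.flip j then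
    ((nodeImage K I v).fresh R.flip h'.choose).2
  else m

def edgeImage (u : CanElem) (R : Role) (v : CanElem) (m : ℕ) : I.Δ × ℕ :=
  (canMap K I v, edgeLabel K I u R v m)

variable {K I}

lemma mem_succEBag_flip {d d' : I.Δ} {R : Role} {n : ℕ} :
    (d', n) ∈ succEBag I d R.flip ↔ (d, n) ∈ succEBag I d' R := by
  simp only [succEBag, ebag, Set.mem_ofPred_eq, BagInterp.roleMult_flip]

lemma NodeImage.fresh_mem (x : NodeImage I) {R : Role} {j : ℕ} (hj : (j : ℕ∞) < x.spare R) :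
    x.fresh R j ∈ succEBag I x.point R \ x.reserved R :=
  Set.mapsTo_enumeration _ hj

lemma NodeImage.fresh_injOn (x : NodeImage I) (R : Role) :
    Set.InjOn (x.fresh R) {j | (j : ℕ∞) < x.spare R} :=
  Set.injOn_enumeration _

lemma edgeLabel_child (u : CanElem) (R : Role) (j m : ℕ) :
    edgeLabel K I u R (CanElem.anon u R j) m = ((nodeImage K I u).fresh R j).2 := by
  have h : ∃ j', CanElem.anon u R j = CanElem.anon u R j' := ⟨j, rfl⟩
  rw [edgeLabel, dif_pos h]
  obtain ⟨-, -, hj⟩ := CanElem.anon.inj h.choose_spec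
  rw [← hj]

lemma edgeLabel_parent (v : CanElem) (R : Role) (j m : ℕ) :
    edgeLabel K I (CanElem.anon v R.flip j) R v m = ((nodeImage K I v).fresh R.flip j).2 := by
  have hchild : ¬∃ j', v = CanElem.anon (CanElem.anon v R.flip j) R j' :=
    fun ⟨_, h⟩ => CanElem.ne_anon_of_eq_anon rfl h
  have h : ∃ j', CanElem.anon v R.flip j = CanElem.anon v R.flip j' := ⟨j, rfl⟩
  rw [edgeLabel, dif_neg hchild, dif_pos h]
  obtain ⟨-, -, hj⟩ := CanElem.anon.inj h.choose_spec
  rw [← hj]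

lemma edgeLabel_ind (a : Ind) (R : Role) (b : Ind) (m : ℕ) :
    edgeLabel K I (CanElem.ind a) R (CanElem.ind b) m = m := by
  simp [edgeLabel]

lemma edgeLabel_flip (u : CanElem) (R : Role) (v : CanElem) (m : ℕ) :
    edgeLabel K I v R.flip u m = edgeLabel K I u R v m := by
  by_cases hchild : ∃ j, v = CanElem.anon u R j
  · obtain ⟨j, rfl⟩ := hchild
    have := edgeLabel_parent (K := K) (I := I) u R.flip j m
    rw [Role.flip_flip] at this
    rw [this, edgeLabel_child]
  by_cases hparent : ∃ j, u = CanElem.anon v R.flip j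
  · obtain ⟨j, rfl⟩ := hparent
    rw [edgeLabel_child, edgeLabel_parent]
  rw [edgeLabel, edgeLabel, dif_neg hchild, dif_neg hparent, Role.flip_flip,
    dif_neg hparent, dif_neg hchild]

lemma aboxRoleMult_le_roleMult (hI : I.IsModel K) (R : Role) (a b : Ind) :
    aboxRoleMult K R a b ≤ I.roleMult R (I.indMap a) (I.indMap b) := by
  cases R with
  | atomic P => exact hI.2 (Assertion.roleA P a b)
  | inv P => exact hI.2 (Assertion.roleA P b a)

section Edges

variable {S : Set CanElem} {R : Role} {u v : CanElem} {m : ℕ}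

lemma edgeImage_mem_reserved (h : (v, m) ∈ ebag (treeRoleMult K S R u))
    (hchild : ¬∃ j, v = CanElem.anon u R j) :
    edgeImage K I u R v m ∈ (nodeImage K I u).reserved R := by
  rcases mem_ebag_treeRoleMult h with ⟨a, b, rfl, rfl, hab⟩ | ⟨j, rfl, -⟩ | ⟨j, rfl, -, -⟩
  · rw [edgeImage, edgeLabel_ind]
    exact ⟨(b, m), ⟨h.1, hab⟩, rfl⟩
  · exact absurd ⟨j, rfl⟩ hchild
  · rw [edgeImage, edgeLabel_parent]
    simp [nodeImage, canMap]

lemma eq_of_edgeImage_eq_of_not_child {v' : CanElem} {m' : ℕ}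
    (h : (v, m) ∈ ebag (treeRoleMult K S R u)) (h' : (v', m') ∈ ebag (treeRoleMult K S R u))
    (hchild : ¬∃ j, v = CanElem.anon u R j) (hchild' : ¬∃ j, v' = CanElem.anon u R j)
    (himg : edgeImage K I u R v m = edgeImage K I u R v' m') : v = v' ∧ m = m' := by
  rcases mem_ebag_treeRoleMult h with ⟨a, b, rfl, rfl, -⟩ | ⟨j, rfl, -⟩ | ⟨j, rfl, -, rfl⟩
  · rcases mem_ebag_treeRoleMult h' with ⟨a', b', ha', rfl, -⟩ | ⟨j, rfl, -⟩ | ⟨j, ⟨⟩, -⟩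
    · cases ha'
      simp only [edgeImage, edgeLabel_ind, Prod.mk.injEq] at himg
      exact ⟨congrArg _ (I.indInj himg.1), himg.2⟩
    · exact absurd ⟨j, rfl⟩ hchild'
  · exact absurd ⟨j, rfl⟩ hchild
  · rcases mem_ebag_treeRoleMult h' with ⟨_, _, ⟨⟩, -⟩ | ⟨j', rfl, -⟩ | ⟨j', hj', -, rfl⟩
    · exact absurd ⟨j', rfl⟩ hchild'
    · obtain ⟨rfl, -, -⟩ := CanElem.anon.inj hj'
      exact ⟨rfl, rfl⟩

variable (hS : ∀ w ∈ S, HasFreshImage K I w)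
include hS

lemma edgeImage_child_mem {j : ℕ} (h : CanElem.anon u R j ∈ S) :
    edgeImage K I u R (CanElem.anon u R j) m ∈
      succEBag I (canMap K I u) R \ (nodeImage K I u).reserved R := by
  rw [edgeImage, edgeLabel_child]
  exact (nodeImage K I u).fresh_mem (hS _ h)

lemma edgeImage_mem_succEBag (hI : I.IsModel K) (h : (v, m) ∈ ebag (treeRoleMult K S R u)) :
    edgeImage K I u R v m ∈ succEBag I (canMap K I u) R := by
  rcases mem_ebag_treeRoleMult h with
    ⟨a, b, rfl, rfl, hab⟩ | ⟨j, rfl, hv, -⟩ | ⟨j, rfl, hu, -⟩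
  · rw [edgeImage, edgeLabel_ind]
    exact ⟨h.1, hab.trans (aboxRoleMult_le_roleMult hI R a b)⟩
  · exact (edgeImage_child_mem hS hv).1
  · rw [edgeImage, edgeLabel_parent, ← mem_succEBag_flip]
    exact ((nodeImage K I v).fresh_mem (hS _ hu)).1

lemma edgeImage_injOn :
    Set.InjOn (fun p : CanElem × ℕ => edgeImage K I u R p.1 p.2)
      (ebag (treeRoleMult K S R u)) := by
  rintro ⟨v, m⟩ h ⟨v', m'⟩ h' himg
  simp only at himg
  by_cases hchild : ∃ j, v = CanElem.anon u R j <;>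
    by_cases hchild' : ∃ j, v' = CanElem.anon u R j
  · obtain ⟨j, rfl⟩ := hchild
    obtain ⟨j', rfl⟩ := hchild'
    obtain ⟨hv, rfl⟩ := mem_ebag_treeRoleMult_child h
    obtain ⟨hv', rfl⟩ := mem_ebag_treeRoleMult_child h'
    rw [edgeImage, edgeImage, edgeLabel_child, edgeLabel_child] at himg
    rw [(nodeImage K I u).fresh_injOn R (hS _ hv) (hS _ hv') himg]
  · obtain ⟨j, rfl⟩ := hchild
    exact absurd (himg ▸ edgeImage_mem_reserved h' hchild')
      (edgeImage_child_mem hS (mem_ebag_treeRoleMult_child h).1).2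
  · obtain ⟨j', rfl⟩ := hchild'
    exact absurd (himg ▸ edgeImage_mem_reserved h hchild)
      (edgeImage_child_mem hS (mem_ebag_treeRoleMult_child h').1).2
  · exact Prod.ext_iff.mpr (eq_of_edgeImage_eq_of_not_child h h' hchild hchild' himg)

end Edges

end Homomorphism

section CanonicalEHom

variable {K : Ontology} {I : BagInterp}

lemma bagSum_treeRoleMult_le (hI : I.IsModel K) {S : Set CanElem}
    (hS : ∀ w ∈ S, HasFreshImage K I w) (R : Role) (u : CanElem) :
    bagSum (treeRoleMult K S R u) ≤ I.conceptMult (DLConcept.ex R) (canMap K I u) :=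
  bagSum_le_bagSum_of_injOn _ (fun _ h => edgeImage_mem_succEBag hS hI h)
    (edgeImage_injOn hS)

lemma conceptMult_canStage_ex (i : ℕ) (R : Role) (u : CanElem) :
    (canStage K i).toInterp.conceptMult (DLConcept.ex R) u =
      bagSum (treeRoleMult K (canStage K i).active R u) :=
  congrArg bagSum (funext (canStage_roleMult_eq i R u))

lemma encard_reserved_le {S : Set CanElem} {u : CanElem} (hu : u ∈ S) (R : Role) :
    ((nodeImage K I u).reserved R).encard ≤ bagSum (treeRoleMult K S R u) := by
  cases u with
  | ind a =>
    refine (Set.encard_image_le _ _).trans ?_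
    rw [← bagSum_eq_encard_ebag]
    refine bagSum_le_bagSum_of_injOn (fun p => (CanElem.ind p.1, p.2)) ?_ ?_
    · exact fun p hp => ⟨hp.1, hp.2.trans le_self_add⟩
    · intro p _ q _ h
      simp only [Prod.mk.injEq, CanElem.ind.injEq] at h
      exact Prod.ext h.1 h.2
  | anon w R₀ j =>
    change (if R = R₀.flip then _ else ∅ : Set (I.Δ × ℕ)).encard ≤ _
    split_ifs with hR
    · subst hR
      have hedge : IsTreeEdge S R₀.flip (CanElem.anon w R₀ j) w :=
        .inr ⟨j, by rw [Role.flip_flip], hu⟩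
      rw [Set.encard_singleton]
      refine le_trans ?_ (le_bagSum _ w)
      simp [treeRoleMult, hedge]
    · simp

lemma canStage_ccl_le (hcore : TBox.IsCore K.tbox) (hI : I.IsModel K) {i : ℕ} {u : CanElem}
    (hle : ∀ C, (canStage K i).toInterp.conceptMult C u ≤ I.conceptMult C (canMap K I u))
    (C : DLConcept) :
    (canStage K i).ccl K.tbox u C ≤ I.conceptMult C (canMap K I u) :=
  iSup_le fun C₀ => (hle C₀.1).trans (I.conceptMult_le_of_entailsCI hcore hI.1 C₀.2 _)

lemma canStage_delta_le_spare (hcore : TBox.IsCore K.tbox) (hI : I.IsModel K) {i : ℕ}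
    {u : CanElem} (hu : u ∈ (canStage K i).active)
    (hle : ∀ C, (canStage K i).toInterp.conceptMult C u ≤ I.conceptMult C (canMap K I u))
    (R : Role) : (canStage K i).delta K.tbox u R ≤ (nodeImage K I u).spare R := by
  have hsucc : (succEBag I (canMap K I u) R).encard ≤
      (nodeImage K I u).spare R + ((nodeImage K I u).reserved R).encard := by
    rw [NodeImage.spare, Set.encard_sdiff_add_encard]
    exact Set.encard_le_encard Set.subset_union_left
  calc (canStage K i).delta K.tbox u R
      ≤ (succEBag I (canMap K I u) R).encard - ((nodeImage K I u).reserved R).encard := by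
        refine tsub_le_tsub ?_ ?_
        · rw [succEBag, ← bagSum_eq_encard_ebag]
          exact canStage_ccl_le hcore hI hle _
        · rw [conceptMult_canStage_ex]
          exact encard_reserved_le hu R
    _ ≤ (nodeImage K I u).spare R := tsub_le_iff_right.mpr hsucc

/-- Proved jointly because the homomorphism property at stage `i` is what bounds the number of
children created at stage `i + 1`. -/
theorem hasFreshImage_and_conceptMult_canStage_le (hcore : TBox.IsCore K.tbox)
    (hI : I.IsModel K) (i : ℕ) :
    (∀ u ∈ (canStage K i).active, HasFreshImage K I u) ∧
      ∀ (u : CanElem) C,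
        (canStage K i).toInterp.conceptMult C u ≤ I.conceptMult C (canMap K I u) := by
  induction i with
  | zero =>
    have hfresh : ∀ u ∈ (canStage K 0).active, HasFreshImage K I u := by
      rintro _ ⟨a, rfl⟩
      trivial
    refine ⟨hfresh, fun u C => ?_⟩
    rcases C with A | R
    · cases u with
      | ind a => exact hI.2 (Assertion.conceptA A a)
      | anon => exact bot_le
    · rw [conceptMult_canStage_ex]
      exact bagSum_treeRoleMult_le hI hfresh R u
  | succ k ih =>
    obtain ⟨hfreshₖ, hleₖ⟩ := ih
    have hfresh : ∀ u ∈ (canStage K (k + 1)).active, HasFreshImage K I u := by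
      intro u hu
      rcases hu with hu | ⟨w, R, j, rfl, hw, hj⟩
      · exact hfreshₖ u hu
      · exact hj.trans_le (canStage_delta_le_spare hcore hI hw (hleₖ w) R)
    refine ⟨hfresh, fun u C => ?_⟩
    rcases C with A | R
    · change (if u ∈ (canStage K k).active then _ else 0) ≤ _
      split_ifs
      · exact canStage_ccl_le hcore hI (hleₖ u) _
      · exact bot_le
    · rw [conceptMult_canStage_ex]
      exact bagSum_treeRoleMult_le hI hfresh R u

lemma hasFreshImage_of_mem_canDomain (hcore : TBox.IsCore K.tbox) (hI : I.IsModel K)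
    {u : CanElem} (hu : u ∈ canDomain K) : HasFreshImage K I u := by
  obtain ⟨i, hi⟩ := Set.mem_iUnion.mp hu
  exact (hasFreshImage_and_conceptMult_canStage_le hcore hI i).1 u hi

lemma canInterp_cI_le (hcore : TBox.IsCore K.tbox) (hI : I.IsModel K) (A : AtomicConcept)
    (u : CanElem) : (canInterp K).cI A u ≤ I.cI A (canMap K I u) :=
  iSup_le fun i => (hasFreshImage_and_conceptMult_canStage_le hcore hI i).2 u (.atomic A)

lemma ebag_canInterp_roleMult (R : Role) (u : CanElem) :
    ebag ((canInterp K).roleMult R u) = ebag (treeRoleMult K (canDomain K) R u) :=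
  congrArg ebag (funext (canInterp_roleMult_eq R u))

def canEHom (hcore : TBox.IsCore K.tbox) (hI : I.IsModel K) : EHom (canInterp K) I where
  h := canMap K I
  hInd _ := rfl
  hC A x := ⟨(canMap K I x.1.1, x.1.2), x.2.1, x.2.2.trans (canInterp_cI_le hcore hI A x.1.1)⟩
  hC_fst _ _ := rfl
  hR P x := ⟨((canMap K I x.1.1.1, canMap K I x.1.1.2),
      edgeLabel K I x.1.1.1 (Role.atomic P) x.1.1.2 x.1.2),
    edgeImage_mem_succEBag (fun _ => hasFreshImage_of_mem_canDomain hcore hI) hI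
      (ebag_canInterp_roleMult (Role.atomic P) x.1.1.1 ▸ x.2)⟩
  hR_fst _ _ := rfl

lemma edgeImage_canInterp_injOn (hcore : TBox.IsCore K.tbox) (hI : I.IsModel K) (R : Role)
    (u : CanElem) : Set.InjOn (fun p : CanElem × ℕ => edgeImage K I u R p.1 p.2)
      (ebag ((canInterp K).roleMult R u)) :=
  ebag_canInterp_roleMult R u ▸
    edgeImage_injOn (fun _ => hasFreshImage_of_mem_canDomain hcore hI)

theorem canEHom_predInj (hcore : TBox.IsCore K.tbox) (hI : I.IsModel K) :
    (canEHom hcore hI).PredInj := by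
  intro u _
  refine ⟨fun A x y _ _ hne himg => hne (congrArg (fun z => z.1.2) himg), ?_, ?_⟩
  · rintro P ⟨⟨⟨u₁, v⟩, m⟩, h⟩ ⟨⟨⟨u₂, v'⟩, m'⟩, h'⟩ (rfl : u₁ = u) (rfl : u₂ = u₁) hne
      himg
    refine hne (edgeImage_canInterp_injOn hcore hI (Role.atomic P) u₂ h h' ?_)
    exact Prod.ext (congrArg (fun z => z.1.1.2) himg) (congrArg (fun z => z.1.2) himg)
  · rintro P ⟨⟨⟨v, u₁⟩, m⟩, h⟩ ⟨⟨⟨v', u₂⟩, m'⟩, h'⟩ (rfl : u₁ = u) (rfl : u₂ = u₁) hne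
      himg
    refine hne (edgeImage_canInterp_injOn hcore hI (Role.inv P) u₂ h h' ?_)
    have hlabel : edgeLabel K I v (Role.inv P).flip u₂ m =
        edgeLabel K I v' (Role.inv P).flip u₂ m' :=
      congrArg (fun z => z.1.2) himg
    exact Prod.ext (congrArg (fun z => z.1.1.1) himg)
      ((edgeLabel_flip _ _ _ _).symm.trans (hlabel.trans (edgeLabel_flip _ _ _ _)))

end CanonicalEHom

/-- For any DL-Lite_core^bag ontology `K` and any bag model
`I` of `K`, there exists an e-homomorphism from the enumerated canonical bag
model `C(K)^e` to `I^e` that is predicate-injective on individuals. -/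
theorem statement_15 (K : Ontology) (hcore : TBox.IsCore K.tbox)
    (I : BagInterp) (hI : I.IsModel K) :
    ∃ e : EHom (canInterp K) I, e.PredInj :=
  ⟨canEHom hcore hI, canEHom_predInj hcore hI⟩
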